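/- Let P₁, …, P_k ⊆ ℝⁿ be compact convex sets with nonempty interior such that 0 lies in the interior of the Minkowski sum P₁ + … + P_k. Then there exists a unique V ∈ ℝⁿ such that Σ_{i=1}^k A_{P_i}(V) = 0. -/

import Mathlib

open scoped RealInnerProductSpace Pointwise
open MeasureTheory

/-- The `V`-weighted volume `Vol_V(P) = ∫_P e^{⟨V,p⟩} dp`. -/
noncomputable def weightedVol {n : ℕ} (P : Set (EuclideanSpace ℝ (Fin n)))
    (V : EuclideanSpace ℝ (Fin n)) : ℝ :=
  ∫ p in P, Real.exp ⟪V, p⟫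

/-- The weighted barycenter `A_P(V) = Vol_V(P)⁻¹ ∫_P p e^{⟨V,p⟩} dp`. -/
noncomputable def weightedBary {n : ℕ} (P : Set (EuclideanSpace ℝ (Fin n)))
    (V : EuclideanSpace ℝ (Fin n)) : EuclideanSpace ℝ (Fin n) :=
  (weightedVol P V)⁻¹ • ∫ p in P, Real.exp ⟪V, p⟫ • p

/-!
`F(V) = ∑ᵢ log Vol_V(Pᵢ)` has gradient `∑ᵢ A_{Pᵢ}(V)`, so the sought vectors are the critical
points of `F`. Each summand `ℓ = log Vol_·(P)` is strictly convex: by strict convexity of `exp`,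
`e^{⟪aV + bW, p⟫ - aℓ(V) - bℓ(W)} ≤ a e^{⟪V, p⟫ - ℓ(V)} + b e^{⟪W, p⟫ - ℓ(W)}`, strictly off a
hyperplane, and the right-hand side integrates to `1` over `P`. A convex body contains balls of a
fixed radius arbitrarily close to each of its points, so `ℓ(V) ≥ ⟪V, p⟫ - δ‖V‖ - C` for all
`p ∈ P`; since a ball around `0` lies in `∑ᵢ Pᵢ`, this gives `F(V) ≥ ε‖V‖ / 4 - C`. Hence `F`
attains its minimum, at its unique critical point.
-/

open Set Metric Filter

section General

variable {E : Type*} [NormedAddCommGroup E]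

theorem addHaar_setOf_inner_eq [InnerProductSpace ℝ E] [FiniteDimensional ℝ E]
    [MeasurableSpace E] [BorelSpace E] (μ : Measure E) [μ.IsAddHaarMeasure] {u : E} (hu : u ≠ 0)
    (c : ℝ) : μ {p | ⟪u, p⟫ = c} = 0 := by
  set K := LinearMap.ker (innerₛₗ ℝ u)
  have hK : K ≠ ⊤ := fun h =>
    hu <| inner_self_eq_zero.1 <| LinearMap.mem_ker.1 (h ▸ Submodule.mem_top : u ∈ K)
  set x₀ := (c / ⟪u, u⟫) • u
  have hx₀ : ⟪u, x₀⟫ = c := by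
    rw [real_inner_smul_right, div_mul_cancel₀ _ (inner_self_ne_zero.2 hu)]
  have hset : {p | ⟪u, p⟫ = c} = (· + -x₀) ⁻¹' K := by
    ext p
    simp [K, inner_add_right, hx₀, add_neg_eq_zero]
  rw [hset, measure_preimage_add_right]
  exact Measure.addHaar_submodule μ K hK

theorem Convex.exists_ball_subset_inter_ball [NormedSpace ℝ E] {P : Set E} (hP : Convex ℝ P)
    (hPb : Bornology.IsBounded P) (hint : (interior P).Nonempty) {δ : ℝ} (hδ : 0 < δ) :
    ∃ ρ > 0, ∀ p ∈ P, ∃ x, ball x ρ ⊆ P ∩ ball p δ := by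
  obtain ⟨q, hq⟩ := hint
  obtain ⟨r, hr, hqr⟩ := Metric.isOpen_iff.1 isOpen_interior q hq
  obtain ⟨R, hR⟩ := hPb.subset_closedBall q
  have hR0 : 0 ≤ R := dist_nonneg.trans (hR (interior_subset hq))
  set θ := δ / (δ + R + r)
  have hθ0 : 0 < θ := by positivity
  have hθ1 : θ ≤ 1 := div_le_one_of_le₀ (by linarith) (by positivity)
  have hθδ : θ * (R + r) < δ := by
    rw [div_mul_eq_mul_div, div_lt_iff₀ (by positivity)]
    nlinarith
  -- the ball is the image of `ball q r` under the homothety of ratio `θ` centred at `p`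
  refine ⟨θ * r, by positivity, fun p hp => ⟨p + θ • (q - p), fun y hy => ⟨?_, ?_⟩⟩⟩
  · rw [mem_ball, dist_eq_norm] at hy
    set z := q + θ⁻¹ • (y - (p + θ • (q - p)))
    have hz : z ∈ P := by
      refine interior_subset (hqr ?_)
      rw [mem_ball, dist_eq_norm, add_sub_cancel_left, norm_smul, norm_inv,
        Real.norm_of_nonneg hθ0.le, inv_mul_lt_iff₀ hθ0]
      exact hy
    have hy_eq : y = (1 - θ) • p + θ • z := by
      simp only [z, smul_add, smul_smul, mul_inv_cancel₀ hθ0.ne', one_smul]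
      module
    exact hy_eq ▸ hP hp hz (by linarith) hθ0.le (by ring)
  · have hqp : ‖q - p‖ ≤ R := by
      rw [← dist_eq_norm, dist_comm]
      exact hR hp
    calc dist y p ≤ dist y (p + θ • (q - p)) + dist (p + θ • (q - p)) p := dist_triangle _ _ _
      _ < θ * r + θ * R := by
        refine add_lt_add_of_lt_of_le hy ?_
        rw [dist_eq_norm, add_sub_cancel_left, norm_smul, Real.norm_of_nonneg hθ0.le]
        gcongr
      _ < δ := by linarith

theorem exists_inner_eq_of_ball_subset [InnerProductSpace ℝ E] {S : Set E} {ε : ℝ} (hε : 0 < ε)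
    (hS : ball 0 ε ⊆ S) (V : E) : ∃ w ∈ S, ⟪V, w⟫ = ε / 2 * ‖V‖ := by
  rcases eq_or_ne V 0 with rfl | hV
  · exact ⟨0, hS (mem_ball_self hε), by simp⟩
  have hV' : 0 < ‖V‖ := norm_pos_iff.2 hV
  refine ⟨(ε / 2 / ‖V‖) • V, hS ?_, ?_⟩
  · rw [mem_ball_zero_iff, norm_smul, Real.norm_of_nonneg (by positivity),
      div_mul_cancel₀ _ hV'.ne']
    linarith
  · rw [real_inner_smul_right, real_inner_self_eq_norm_sq]
    field_simp

theorem ConvexOn.isMinOn_of_hasFDerivAt_eq_zero [NormedSpace ℝ E] {f : E → ℝ} {x : E}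
    (hf : ConvexOn ℝ univ f) (hx : HasFDerivAt f (0 : E →L[ℝ] ℝ) x) : IsMinOn f univ x := by
  intro y _
  set L : ℝ →ᵃ[ℝ] E := AffineMap.lineMap x y
  have hline : ConvexOn ℝ univ (f ∘ L) := hf.comp_affineMap L
  have hderiv : HasDerivAt (f ∘ L) 0 0 := by
    have hL : HasDerivAt L (y - x) 0 := AffineMap.hasDerivAt_lineMap
    have hx' : HasFDerivAt f (0 : E →L[ℝ] ℝ) (L 0) := by simpa [L] using hx
    simpa using hx'.comp_hasDerivAt (0 : ℝ) hL
  have := hline.deriv_le_slope (mem_univ 0) (mem_univ 1) one_pos hderiv.differentiableAt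
  simpa [hderiv.deriv, slope, L] using this

end General

section WeightedVolume

variable {n : ℕ} {P : Set (EuclideanSpace ℝ (Fin n))}

theorem weightedVol_pos (hP : IsCompact P) (hint : (interior P).Nonempty)
    (V : EuclideanSpace ℝ (Fin n)) : 0 < weightedVol P V := by
  have : NeZero (volume.restrict P) := ⟨by
    simpa [Measure.restrict_eq_zero] using (Measure.measure_pos_of_nonempty_interior _ hint).ne'⟩
  exact integral_exp_pos (ContinuousOn.integrableOn_compact hP (by fun_prop))

theorem setIntegral_exp_inner_sub (hP : IsCompact P) (hint : (interior P).Nonempty)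
    (V : EuclideanSpace ℝ (Fin n)) (c : ℝ) :
    ∫ p in P, Real.exp (⟪V, p⟫ - c) = Real.exp (Real.log (weightedVol P V) - c) := by
  simp_rw [Real.exp_sub, integral_div, Real.exp_log (weightedVol_pos hP hint V)]
  rfl

theorem strictConvexOn_log_weightedVol (hP : IsCompact P) (hint : (interior P).Nonempty) :
    StrictConvexOn ℝ univ fun V => Real.log (weightedVol P V) := by
  refine ⟨convex_univ, fun V _ W _ hVW a b ha hb hab => ?_⟩
  set ℓ := fun V => Real.log (weightedVol P V)
  set c := a * ℓ V + b * ℓ W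
  set f := fun p => Real.exp (⟪a • V + b • W, p⟫ - c)
  set g := fun p => a * Real.exp (⟪V, p⟫ - ℓ V) + b * Real.exp (⟪W, p⟫ - ℓ W)
  have hf_eq : ∀ p, f p = Real.exp (a • (⟪V, p⟫ - ℓ V) + b • (⟪W, p⟫ - ℓ W)) := fun p => by
    simp only [f, c, inner_add_left, real_inner_smul_left, smul_eq_mul]
    ring_nf
  have hfg : ∀ p, f p ≤ g p := fun p =>
    (hf_eq p).trans_le (convexOn_exp.2 (mem_univ _) (mem_univ _) ha.le hb.le hab)
  have hfg_lt : ∀ p, ⟪V - W, p⟫ ≠ ℓ V - ℓ W → f p < g p := fun p hp =>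
    (hf_eq p).trans_lt <| strictConvexOn_exp.2 (mem_univ _) (mem_univ _)
      (fun h => hp (by rw [inner_sub_left]; linarith)) ha hb hab
  have hf_int : IntegrableOn f P := ContinuousOn.integrableOn_compact hP (by fun_prop)
  have hV_int : IntegrableOn (fun p => Real.exp (⟪V, p⟫ - ℓ V)) P :=
    ContinuousOn.integrableOn_compact hP (by fun_prop)
  have hW_int : IntegrableOn (fun p => Real.exp (⟪W, p⟫ - ℓ W)) P :=
    ContinuousOn.integrableOn_compact hP (by fun_prop)
  have hg_int : IntegrableOn g P := (hV_int.const_mul a).add (hW_int.const_mul b)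
  have hg : ∫ p in P, g p = 1 := by
    rw [integral_add (hV_int.const_mul a) (hW_int.const_mul b), integral_const_mul,
      integral_const_mul, setIntegral_exp_inner_sub hP hint, setIntegral_exp_inner_sub hP hint]
    simp [ℓ, hab]
  have hlt : ∫ p in P, f p < ∫ p in P, g p := by
    have hpos : 0 < ∫ p in P, (g p - f p) := by
      rw [setIntegral_pos_iff_support_of_nonneg_ae
        (ae_of_all _ fun p => sub_nonneg.2 (hfg p)) (hg_int.sub hf_int)]
      calc 0 < volume P := Measure.measure_pos_of_nonempty_interior _ hint
        _ = volume (P \ {p | ⟪V - W, p⟫ = ℓ V - ℓ W}) :=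
          (measure_sdiff_null (addHaar_setOf_inner_eq volume (sub_ne_zero.2 hVW) _)).symm
        _ ≤ volume ((Function.support fun p => g p - f p) ∩ P) :=
          measure_mono fun p hp => ⟨(sub_pos.2 (hfg_lt p hp.2)).ne', hp.1⟩
    rwa [integral_sub hg_int hf_int, sub_pos] at hpos
  rw [hg, setIntegral_exp_inner_sub hP hint, Real.exp_lt_one_iff, sub_neg] at hlt
  simpa [ℓ, c] using hlt

theorem hasFDerivAt_weightedVol (hP : IsCompact P) (V₀ : EuclideanSpace ℝ (Fin n)) :
    HasFDerivAt (weightedVol P) (innerSL ℝ (∫ p in P, Real.exp ⟪V₀, p⟫ • p)) V₀ := by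
  have hderiv : ∀ p V : EuclideanSpace ℝ (Fin n),
      HasFDerivAt (fun V => Real.exp ⟪V, p⟫) (innerSL ℝ (Real.exp ⟪V, p⟫ • p)) V := fun p V => by
    simpa [real_inner_comm p] using (innerSL ℝ p).hasFDerivAt.exp (x := V)
  have hbound : ∀ p, ∀ V ∈ ball V₀ 1,
      ‖innerSL ℝ (Real.exp ⟪V, p⟫ • p)‖ ≤ Real.exp ((‖V₀‖ + 1) * ‖p‖) * ‖p‖ := fun p V hV => by
    rw [innerSL_apply_norm, norm_smul, Real.norm_of_nonneg (Real.exp_pos _).le]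
    gcongr
    calc ⟪V, p⟫ ≤ ‖V‖ * ‖p‖ := real_inner_le_norm V p
      _ ≤ (‖V₀‖ + 1) * ‖p‖ := by
        gcongr
        linarith [norm_le_norm_add_norm_sub' V V₀, mem_ball_iff_norm.1 hV]
  have hmoment : IntegrableOn (fun p => Real.exp ⟪V₀, p⟫ • p) P :=
    ContinuousOn.integrableOn_compact hP (by fun_prop)
  have key := hasFDerivAt_integral_of_dominated_of_fderiv_le (μ := volume.restrict P)
    (ball_mem_nhds V₀ one_pos)
    (Eventually.of_forall fun V => (by fun_prop : Continuous _).aestronglyMeasurable)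
    (ContinuousOn.integrableOn_compact hP (by fun_prop))
    (by fun_prop : Continuous fun p => innerSL ℝ (Real.exp ⟪V₀, p⟫ • p)).aestronglyMeasurable
    (ae_of_all _ hbound)
    (ContinuousOn.integrableOn_compact hP (by fun_prop))
    (ae_of_all _ fun p V _ => hderiv p V)
  rwa [(innerSL ℝ).integral_comp_commSL (by simp) hmoment] at key

theorem hasFDerivAt_log_weightedVol (hP : IsCompact P) (hint : (interior P).Nonempty)
    (V : EuclideanSpace ℝ (Fin n)) :
    HasFDerivAt (fun V => Real.log (weightedVol P V)) (innerSL ℝ (weightedBary P V)) V := by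
  refine ((hasFDerivAt_weightedVol hP V).log (weightedVol_pos hP hint V).ne').congr_fderiv ?_
  rw [weightedBary, map_smulₛₗ, conj_trivial]

theorem exists_le_log_weightedVol (hP : IsCompact P) (hconv : Convex ℝ P)
    (hint : (interior P).Nonempty) {δ : ℝ} (hδ : 0 < δ) :
    ∃ C, ∀ V, ∀ p ∈ P, C + ⟪V, p⟫ - δ * ‖V‖ ≤ Real.log (weightedVol P V) := by
  obtain ⟨ρ, hρ, hball⟩ := hconv.exists_ball_subset_inter_ball hP.isBounded hint hδ
  refine ⟨Real.log (volume.real (ball (0 : EuclideanSpace ℝ (Fin n)) ρ)), fun V p hp => ?_⟩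
  obtain ⟨x, hx⟩ := hball p hp
  have hvol : volume.real (ball x ρ) = volume.real (ball (0 : EuclideanSpace ℝ (Fin n)) ρ) := by
    rw [measureReal_def, measureReal_def, Measure.addHaar_ball_center]
  have hvol_pos : 0 < volume.real (ball x ρ) :=
    ENNReal.toReal_pos (measure_ball_pos volume x hρ).ne' measure_ball_lt_top.ne
  have hexp : ∀ y ∈ ball x ρ, Real.exp (⟪V, p⟫ - δ * ‖V‖) ≤ Real.exp ⟪V, y⟫ := fun y hy => by
    have hpy : ⟪V, p - y⟫ ≤ ‖V‖ * δ :=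
      (real_inner_le_norm V _).trans <| by
        gcongr
        rw [← dist_eq_norm, dist_comm]
        exact (mem_ball.1 (hx hy).2).le
    rw [inner_sub_right] at hpy
    rw [Real.exp_le_exp]
    linarith
  have hint_P : IntegrableOn (fun y => Real.exp ⟪V, y⟫) P :=
    ContinuousOn.integrableOn_compact hP (by fun_prop)
  have hlow : volume.real (ball x ρ) * Real.exp (⟪V, p⟫ - δ * ‖V‖) ≤ weightedVol P V :=
    calc _ ≤ ∫ y in ball x ρ, Real.exp ⟪V, y⟫ :=
          setIntegral_ge_of_const_le measurableSet_ball measure_ball_lt_top.ne hexp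
            (hint_P.mono_set fun y hy => (hx hy).1)
      _ ≤ weightedVol P V :=
          setIntegral_mono_set hint_P (ae_of_all _ fun y => (Real.exp_pos _).le)
            (Eventually.of_forall fun y hy => (hx hy).1)
  calc _ = Real.log (volume.real (ball x ρ) * Real.exp (⟪V, p⟫ - δ * ‖V‖)) := by
        rw [Real.log_mul hvol_pos.ne' (Real.exp_pos _).ne', Real.log_exp, hvol]
        ring
    _ ≤ Real.log (weightedVol P V) := Real.log_le_log (by positivity) hlow

end WeightedVolume

section Sum

variable {n : ℕ} {ι : Type*} [Fintype ι] {P : ι → Set (EuclideanSpace ℝ (Fin n))}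

theorem hasFDerivAt_sum_log_weightedVol (hPcpt : ∀ i, IsCompact (P i))
    (hPint : ∀ i, (interior (P i)).Nonempty) (V : EuclideanSpace ℝ (Fin n)) :
    HasFDerivAt (fun V => ∑ i, Real.log (weightedVol (P i) V))
      (innerSL ℝ (∑ i, weightedBary (P i) V)) V := by
  rw [map_sum]
  exact HasFDerivAt.fun_sum fun i _ => hasFDerivAt_log_weightedVol (hPcpt i) (hPint i) V

theorem strictConvexOn_sum_log_weightedVol (hPcpt : ∀ i, IsCompact (P i))
    (hPint : ∀ i, (interior (P i)).Nonempty) (hzero : 0 ∈ interior (∑ i, P i)) :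
    StrictConvexOn ℝ univ fun V => ∑ i, Real.log (weightedVol (P i) V) := by
  rcases subsingleton_or_nontrivial (EuclideanSpace ℝ (Fin n)) with hE | hE
  · exact ⟨convex_univ, fun V _ W _ hVW => absurd (Subsingleton.elim V W) hVW⟩
  have : Nonempty ι := by
    by_contra hι
    rw [not_nonempty_iff] at hι
    simp [← Set.singleton_zero, interior_singleton] at hzero
  refine ⟨convex_univ, fun V _ W _ hVW a b ha hb hab => ?_⟩
  simp only [smul_eq_mul, Finset.mul_sum, ← Finset.sum_add_distrib]
  exact Finset.sum_lt_sum_of_nonempty Finset.univ_nonempty fun i _ =>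
    (strictConvexOn_log_weightedVol (hPcpt i) (hPint i)).2 trivial trivial hVW ha hb hab

theorem tendsto_sum_log_weightedVol_cocompact (hPcpt : ∀ i, IsCompact (P i))
    (hPconv : ∀ i, Convex ℝ (P i)) (hPint : ∀ i, (interior (P i)).Nonempty)
    (hzero : 0 ∈ interior (∑ i, P i)) :
    Tendsto (fun V => ∑ i, Real.log (weightedVol (P i) V)) (cocompact _) atTop := by
  obtain ⟨ε, hε, hball⟩ := Metric.mem_nhds_iff.1 (mem_interior_iff_mem_nhds.1 hzero)
  set δ := ε / (4 * (Fintype.card ι + 1))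
  have hδ : 0 < δ := by positivity
  have hcard : Fintype.card ι * δ ≤ ε / 4 := by
    rw [mul_div_assoc', div_le_div_iff₀ (by positivity) (by positivity)]
    nlinarith
  choose C hC using fun i => exists_le_log_weightedVol (hPcpt i) (hPconv i) (hPint i) hδ
  have hlower : ∀ V, ε / 4 * ‖V‖ + ∑ i, C i ≤ ∑ i, Real.log (weightedVol (P i) V) := by
    intro V
    obtain ⟨w, hw, hVw⟩ := exists_inner_eq_of_ball_subset hε hball V
    obtain ⟨g, hg, rfl⟩ := (Set.mem_fintype_sum _ _).1 hw
    calc ε / 4 * ‖V‖ + ∑ i, C i ≤ ∑ i, (C i + ⟪V, g i⟫ - δ * ‖V‖) := by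
          rw [Finset.sum_sub_distrib, Finset.sum_add_distrib, ← inner_sum, hVw, Finset.sum_const,
            Finset.card_univ, nsmul_eq_mul]
          nlinarith [norm_nonneg V]
      _ ≤ _ := Finset.sum_le_sum fun i _ => hC i V (g i) (hg i)
  refine tendsto_atTop_mono hlower (tendsto_atTop_add_const_right _ _ ?_)
  exact tendsto_norm_cocompact_atTop.const_mul_atTop (by positivity)

end Sum

/-- Corollary 1.7: there is a unique `V ∈ ℝⁿ` with `∑ᵢ A_{Pᵢ}(V) = 0`. -/
theorem stmt3 {n k : ℕ}
    (P : Fin k → Set (EuclideanSpace ℝ (Fin n)))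
    (hPcpt : ∀ i, IsCompact (P i)) (hPconv : ∀ i, Convex ℝ (P i))
    (hPint : ∀ i, (interior (P i)).Nonempty)
    (hzero : (0 : EuclideanSpace ℝ (Fin n)) ∈ interior (∑ i, P i)) :
    ∃! V : EuclideanSpace ℝ (Fin n), ∑ i, weightedBary (P i) V = 0 := by
  set F := fun V : EuclideanSpace ℝ (Fin n) => ∑ i, Real.log (weightedVol (P i) V)
  have hF := hasFDerivAt_sum_log_weightedVol hPcpt hPint
  have hF_strict := strictConvexOn_sum_log_weightedVol hPcpt hPint hzero
  obtain ⟨V₀, hV₀⟩ := (continuous_iff_continuousAt.2 fun V => (hF V).continuousAt).exists_forall_le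
    (tendsto_sum_log_weightedVol_cocompact hPcpt hPconv hPint hzero)
  have hV₀_min : IsMinOn F univ V₀ := fun V _ => hV₀ V
  refine ⟨V₀, ?_, fun W hW => ?_⟩
  · have := (hV₀_min.isLocalMin univ_mem).hasFDerivAt_eq_zero (hF V₀)
    rwa [← norm_eq_zero, innerSL_apply_norm, norm_eq_zero] at this
  · have hW_min : IsMinOn F univ W :=
      hF_strict.convexOn.isMinOn_of_hasFDerivAt_eq_zero (by simpa [hW] using hF W)
    exact hF_strict.eq_of_isMinOn hW_min hV₀_min (mem_univ _) (mem_univ _)
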